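/- arXiv:2605.02770 — 6 statements merged into one kernel-verified Lean document; each statement's English description precedes it below -/
import Mathlib

section
/- Let n be a natural number, A an n×n Hermitian complex matrix, M : Fin n → ℝ a (diagonal) mass with M i > 0 for every i, and λ > 0 a real number. Assume λ is at most the smallest generalized eigenvalue of the pair (A, M), expressed variationally: for every w : Fin n → ℂ, λ · Σᵢ M i · |w i|² ≤ Re(Σᵢ conj(w i) · (A.mulVec w) i). If z : Fin n → ℂ satisfies the critical-point equation of the discrete Ginzburg–Landau energy, namely (A.mulVec z) i = λ · M i · (1 − |z i|²) · z i for every i, then z = 0. -/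
/-- If `λ` is at most the smallest generalized eigenvalue of the pair `(A, M)`
(`A` Hermitian, `M` a positive diagonal mass), then the only critical point of
the discrete Ginzburg–Landau energy is `z = 0`. -/
theorem stmt_0 (n : ℕ) (A : Matrix (Fin n) (Fin n) ℂ) (hA : A.IsHermitian)
    (M : Fin n → ℝ) (hM : ∀ i, 0 < M i) (lam : ℝ) (hlam : 0 < lam)
    (hmin : ∀ w : Fin n → ℂ,
      lam * ∑ i, M i * ‖w i‖ ^ 2 ≤ (∑ i, (starRingEnd ℂ) (w i) * A.mulVec w i).re)
    (z : Fin n → ℂ)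
    (hz : ∀ i, A.mulVec z i = ((lam * M i * (1 - ‖z i‖ ^ 2) : ℝ) : ℂ) * z i) :
    z = 0 := by
  have conjmul : ∀ i, (starRingEnd ℂ) (z i) * z i = ((‖z i‖ ^ 2 : ℝ) : ℂ) := by
    intro i
    rw [mul_comm, Complex.mul_conj']
    norm_cast
  have key : ∀ i, ((starRingEnd ℂ) (z i) * A.mulVec z i).re
      = lam * M i * (1 - ‖z i‖ ^ 2) * ‖z i‖ ^ 2 := by
    intro i
    rw [hz i]
    have e : (starRingEnd ℂ) (z i) * (((lam * M i * (1 - ‖z i‖ ^ 2) : ℝ) : ℂ) * z i)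
        = ((lam * M i * (1 - ‖z i‖ ^ 2) : ℝ) : ℂ) * ((starRingEnd ℂ) (z i) * z i) := by
      ring
    rw [e, conjmul i, ← Complex.ofReal_mul, Complex.ofReal_re]
  have h1 := hmin z
  rw [Complex.re_sum, Finset.sum_congr rfl (fun i _ => key i)] at h1
  have h2 : ∑ i, lam * M i * (1 - ‖z i‖ ^ 2) * ‖z i‖ ^ 2
      = lam * ∑ i, M i * ‖z i‖ ^ 2 - lam * ∑ i, M i * (‖z i‖ ^ 2) ^ 2 := by
    rw [Finset.mul_sum, Finset.mul_sum, ← Finset.sum_sub_distrib]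
    exact Finset.sum_congr rfl (fun i _ => by ring)
  rw [h2] at h1
  have h4 : ∑ i, M i * (‖z i‖ ^ 2) ^ 2 ≤ 0 := by
    nlinarith
  have hnn : ∀ i ∈ Finset.univ, (0:ℝ) ≤ M i * (‖z i‖ ^ 2) ^ 2 := fun i _ =>
    mul_nonneg (hM i).le (by positivity)
  have hsum0 : ∑ i, M i * (‖z i‖ ^ 2) ^ 2 = 0 :=
    le_antisymm h4 (Finset.sum_nonneg hnn)
  have hall := (Finset.sum_eq_zero_iff_of_nonneg hnn).mp hsum0
  funext i
  have := hall i (Finset.mem_univ i)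
  have hz0 : ‖z i‖ = 0 := by
    by_contra h
    have : 0 < (‖z i‖ ^ 2) ^ 2 := by positivity
    nlinarith [hM i]
  simpa using norm_eq_zero.mp hz0
end

section
/- Let ω_ij, ω_jk, ω_ki ∈ (−π, π) and Ω ∈ ℝ be real numbers with ω_ij + ω_jk + ω_ki + Ω = 2·π·s where s = 1 or s = −1. For t ∈ ℝ define ω_ij(t) = ω_ij + (1−t)·(1/3)·(Ω − 2ω_ij + ω_jk + ω_ki), ω_jk(t) = ω_jk + (1−t)·(1/3)·(Ω + ω_ij − 2ω_jk + ω_ki), and ω_ki(t) = ω_ki + (1−t)·(1/3)·(Ω + ω_ij + ω_jk − 2ω_ki). Then for every t ∈ [0, 1], each of ω_ij(t), ω_jk(t), ω_ki(t) lies in the open interval (−π, π). -/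
open Real in
lemma conv_aux (a s t : ℝ) (ha : a ∈ Set.Ioo (-π) π) (hs : s = 1 ∨ s = -1)
    (ht : t ∈ Set.Icc (0:ℝ) 1) :
    t * a + (1 - t) * (2 * π * s / 3) ∈ Set.Ioo (-π) π := by
  obtain ⟨ha1, ha2⟩ := ha
  obtain ⟨ht0, ht1⟩ := ht
  have hπ := Real.pi_pos
  rcases hs with h | h <;> subst h <;> constructor <;> nlinarith

open Real in
/-- During the flat-to-curved homotopy on a singular triangle of index `±1`,
every interpolated edge rotation stays in the open interval `(-π, π)`. -/
theorem stmt_8 (ωij ωjk ωki Ω : ℝ)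
    (hij : ωij ∈ Set.Ioo (-π) π) (hjk : ωjk ∈ Set.Ioo (-π) π)
    (hki : ωki ∈ Set.Ioo (-π) π)
    (s : ℝ) (hs : s = 1 ∨ s = -1)
    (hsum : ωij + ωjk + ωki + Ω = 2 * π * s) :
    ∀ t ∈ Set.Icc (0 : ℝ) 1,
      (ωij + (1 - t) * (1 / 3) * (Ω - 2 * ωij + ωjk + ωki)) ∈ Set.Ioo (-π) π ∧
      (ωjk + (1 - t) * (1 / 3) * (Ω + ωij - 2 * ωjk + ωki)) ∈ Set.Ioo (-π) π ∧
      (ωki + (1 - t) * (1 / 3) * (Ω + ωij + ωjk - 2 * ωki)) ∈ Set.Ioo (-π) π := by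
  intro t ht
  have hΩ : Ω = 2 * π * s - ωij - ωjk - ωki := by linarith
  subst hΩ
  refine ⟨?_, ?_, ?_⟩
  · have h : ωij + (1 - t) * (1 / 3) * (2 * π * s - ωij - ωjk - ωki - 2 * ωij + ωjk + ωki) = t * ωij + (1 - t) * (2 * π * s / 3) := by ring
    rw [h]; exact conv_aux ωij s t hij hs ht
  · have h : ωjk + (1 - t) * (1 / 3) * (2 * π * s - ωij - ωjk - ωki + ωij - 2 * ωjk + ωki) = t * ωjk + (1 - t) * (2 * π * s / 3) := by ring
    rw [h]; exact conv_aux ωjk s t hjk hs ht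
  · have h : ωki + (1 - t) * (1 / 3) * (2 * π * s - ωij - ωjk - ωki + ωij + ωjk - 2 * ωki) = t * ωki + (1 - t) * (2 * π * s / 3) := by ring
    rw [h]; exact conv_aux ωki s t hki hs ht
end

section
/- Let h_ij, h_ji, h_jk, h_kj, h_ki, h_ik be complex numbers of modulus 1 and θ_i, θ_j, θ_k real numbers satisfying h_ik = Complex.exp(Complex.I · θ_i) · h_ij, h_ji = Complex.exp(Complex.I · θ_j) · h_jk, and h_kj = Complex.exp(Complex.I · θ_k) · h_ki. Define r_ij = −h_ji · h_ij⁻¹, r_jk = −h_kj · h_jk⁻¹, and r_ki = −h_ik · h_ki⁻¹. Then r_ki · r_jk · r_ij = Complex.exp(Complex.I · (θ_i + θ_j + θ_k − π)). -/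
/-- The discrete Levi-Civita connection `r_ij = −ĥ_ji ĥ_ij⁻¹` is compatible with
the face curvature `Ω^LC_ijk = θ_i + θ_j + θ_k − π`. -/
theorem stmt_11 (hij hji hjk hkj hki hik : ℂ) (θi θj θk : ℝ)
    (huij : ‖hij‖ = 1) (huji : ‖hji‖ = 1)
    (hujk : ‖hjk‖ = 1) (hukj : ‖hkj‖ = 1)
    (huki : ‖hki‖ = 1) (huik : ‖hik‖ = 1)
    (hi : hik = Complex.exp (Complex.I * θi) * hij)
    (hj : hji = Complex.exp (Complex.I * θj) * hjk)
    (hk : hkj = Complex.exp (Complex.I * θk) * hki) :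
    (-(hik * hki⁻¹)) * (-(hkj * hjk⁻¹)) * (-(hji * hij⁻¹))
      = Complex.exp (Complex.I * ((θi + θj + θk - Real.pi : ℝ))) := by
  have nij : hij ≠ 0 := by intro h; simp [h] at huij
  have njk : hjk ≠ 0 := by intro h; simp [h] at hujk
  have nki : hki ≠ 0 := by intro h; simp [h] at huki
  subst hi hj hk
  have hpi : Complex.exp (Complex.I * (Real.pi : ℂ)) = -1 := by
    rw [mul_comm]; exact Complex.exp_pi_mul_I
  rw [show ((θi + θj + θk - Real.pi : ℝ) : ℂ) = (θi : ℂ) + θj + θk - Real.pi by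
    push_cast; ring]
  rw [show Complex.I * ((θi : ℂ) + θj + θk - Real.pi)
    = Complex.I * θi + Complex.I * θj + Complex.I * θk - Complex.I * Real.pi by ring]
  rw [Complex.exp_sub, Complex.exp_add, Complex.exp_add, hpi]
  field_simp
end

section
/- Let L_A, M_A be m×m Hermitian complex matrices with M_A positive definite, and L_B, M_B be n×n Hermitian complex matrices with M_B positive definite. Let λ_A, λ_B be real numbers such that for all x : m → ℂ, λ_A · Re(star x ⬝ᵥ M_A.mulVec x) ≤ Re(star x ⬝ᵥ L_A.mulVec x), and for all y : n → ℂ, λ_B · Re(star y ⬝ᵥ M_B.mulVec y) ≤ Re(star y ⬝ᵥ L_B.mulVec y). Then for every z : m × n → ℂ, (λ_A + λ_B) · Re(star z ⬝ᵥ ((M_A ⊗ₖ M_B).mulVec z)) ≤ Re(star z ⬝ᵥ ((L_A ⊗ₖ M_B + M_A ⊗ₖ L_B).mulVec z)), where ⊗ₖ denotes the Kronecker product. -/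
open Kronecker Matrix ComplexOrder in
lemma conjTranspose_kron {m n : Type*} [Fintype m] [Fintype n]
    (A : Matrix m m ℂ) (B : Matrix n n ℂ) : (A ⊗ₖ B)ᴴ = Aᴴ ⊗ₖ Bᴴ := by
  ext i j
  simp [conjTranspose_apply, kroneckerMap_apply, star_mul']

open Kronecker Matrix ComplexOrder in
lemma psd_kron {m n : Type*} [Fintype m] [Fintype n] [DecidableEq m] [DecidableEq n]
    {A : Matrix m m ℂ} {B : Matrix n n ℂ}
    (hA : A.PosSemidef) (hB : B.PosSemidef) : (A ⊗ₖ B).PosSemidef := by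
  exact hA.kronecker hB


open Matrix in
lemma herm_im_zero {k : Type*} [Fintype k] {A : Matrix k k ℂ} (hA : A.IsHermitian)
    (x : k → ℂ) : (star x ⬝ᵥ A.mulVec x).im = 0 := by
  have h1 : star (A.mulVec x) ⬝ᵥ x = star (star x ⬝ᵥ A.mulVec x) :=
    star_dotProduct _ _
  have h2 : star (A.mulVec x) ⬝ᵥ x = star x ⬝ᵥ A.mulVec x := by
    rw [star_mulVec, ← dotProduct_mulVec, hA.eq]
  exact Complex.conj_eq_iff_im.mp (h1.symm.trans h2)

open Matrix in
lemma herm_smul {k : Type*} {A : Matrix k k ℂ} (hA : A.IsHermitian) (r : ℝ) :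
    ((r : ℂ) • A).IsHermitian := by
  unfold Matrix.IsHermitian
  rw [conjTranspose_smul, hA.eq]
  simp

open Kronecker Matrix ComplexOrder in
/-- Rayleigh-quotient lower bound: the smallest generalized eigenvalue of the
product-space connection Laplacian `L_A ⊗ M_B + M_A ⊗ L_B` with respect to the
product mass `M_A ⊗ M_B` is at least `λ_A + λ_B`. -/
theorem stmt_13 {m n : Type*} [Fintype m] [Fintype n]
    (L_A M_A : Matrix m m ℂ) (L_B M_B : Matrix n n ℂ)
    (hLA : L_A.IsHermitian) (hMA : M_A.PosDef)
    (hLB : L_B.IsHermitian) (hMB : M_B.PosDef)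
    (lamA lamB : ℝ)
    (hA : ∀ x : m → ℂ,
      lamA * (star x ⬝ᵥ M_A.mulVec x).re ≤ (star x ⬝ᵥ L_A.mulVec x).re)
    (hB : ∀ y : n → ℂ,
      lamB * (star y ⬝ᵥ M_B.mulVec y).re ≤ (star y ⬝ᵥ L_B.mulVec y).re) :
    ∀ z : m × n → ℂ,
      (lamA + lamB) * (star z ⬝ᵥ ((M_A ⊗ₖ M_B).mulVec z)).re
        ≤ (star z ⬝ᵥ ((L_A ⊗ₖ M_B + M_A ⊗ₖ L_B).mulVec z)).re := by
  classical
  intro z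
  -- A' := L_A - lamA • M_A is PSD
  have hA' : (L_A - (lamA : ℂ) • M_A).PosSemidef := by
    refine .of_dotProduct_mulVec_nonneg (hLA.sub (herm_smul hMA.1 lamA)) fun x => ?_
    have herm : ((L_A - (lamA : ℂ) • M_A)).IsHermitian :=
      hLA.sub (herm_smul hMA.1 lamA)
    rw [Complex.le_def]
    constructor
    · have := hA x
      simp only [sub_mulVec, smul_mulVec, dotProduct_sub, dotProduct_smul,
        Complex.sub_re, Complex.zero_re, smul_eq_mul, Complex.mul_re,
        Complex.ofReal_re, Complex.ofReal_im, zero_mul, sub_zero]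
      linarith
    · simpa using (herm_im_zero herm x).symm
  have hB' : (L_B - (lamB : ℂ) • M_B).PosSemidef := by
    refine .of_dotProduct_mulVec_nonneg (hLB.sub (herm_smul hMB.1 lamB)) fun y => ?_
    have herm : ((L_B - (lamB : ℂ) • M_B)).IsHermitian :=
      hLB.sub (herm_smul hMB.1 lamB)
    rw [Complex.le_def]
    constructor
    · have := hB y
      simp only [sub_mulVec, smul_mulVec, dotProduct_sub, dotProduct_smul,
        Complex.sub_re, Complex.zero_re, smul_eq_mul, Complex.mul_re,
        Complex.ofReal_re, Complex.ofReal_im, zero_mul, sub_zero]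
      linarith
    · simpa using (herm_im_zero herm y).symm
  have h1 := (psd_kron hA' hMB.posSemidef).add (psd_kron hMA.posSemidef hB')
  have h2 := h1.dotProduct_mulVec_nonneg z
  have key : ((L_A - (lamA : ℂ) • M_A) ⊗ₖ M_B + M_A ⊗ₖ (L_B - (lamB : ℂ) • M_B))
      = (L_A ⊗ₖ M_B + M_A ⊗ₖ L_B) - ((lamA : ℂ) + lamB) • (M_A ⊗ₖ M_B) := by
    ext i j
    simp [kroneckerMap_apply, add_mul, mul_add, sub_mul, mul_sub, smul_eq_mul]
    ring
  rw [key] at h2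
  have h3 : 0 ≤ (star z ⬝ᵥ ((L_A ⊗ₖ M_B + M_A ⊗ₖ L_B)
      - ((lamA : ℂ) + lamB) • (M_A ⊗ₖ M_B)).mulVec z).re := by
    rw [Complex.le_def] at h2
    simpa using h2.1
  simp only [sub_mulVec, smul_mulVec, dotProduct_sub, dotProduct_smul,
    Complex.sub_re, smul_eq_mul, Complex.mul_re, Complex.add_re, Complex.add_im,
    Complex.ofReal_re, Complex.ofReal_im, add_zero, zero_mul, sub_zero] at h3
  linarith
end

section
/- Let L_A, N_A be m×m Hermitian complex matrices, L_B, N_B be n×n Hermitian complex matrices, m_A : m → ℝ and m_B : n → ℝ real weights, and λ ∈ ℝ. For a complex m×n matrix Z define GL(Z) = ½·Re(Matrix.trace (Zᴴ * L_A * Z * N_Bᵀ)) + ½·Re(Matrix.trace (Zᴴ * N_A * Z * L_Bᵀ)) + (λ/4)·Σ_{i,j} m_A i · m_B j · (|Z i j|² − 1)². Fix Z and a direction W (complex m×n matrices), and define G = L_A * Z * N_Bᵀ + N_A * Z * L_Bᵀ + λ · (fun i j => m_A i · m_B j · (|Z i j|² − 1) · Z i j). Then the real function s ↦ GL(Z +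 s • W) has derivative Re(Matrix.trace (Gᴴ * W)) at s = 0. -/
open Matrix

lemma norm_sq_re_im (z : ℂ) : ‖z‖^2 = z.re^2 + z.im^2 := by
  rw [Complex.sq_norm, Complex.normSq_apply]; ring

lemma entry_deriv (z w : ℂ) :
    HasDerivAt (fun s : ℝ => (‖z + s • w‖ ^ 2 - 1) ^ 2)
      (4 * (‖z‖ ^ 2 - 1) * (z.re * w.re + z.im * w.im)) 0 := by
  have hfun : (fun s : ℝ => (‖z + s • w‖ ^ 2 - 1) ^ 2)
      = fun s : ℝ => (((z.re + s * w.re) ^ 2 + (z.im + s * w.im) ^ 2) - 1) ^ 2 := by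
    funext s
    rw [norm_sq_re_im]
    simp [Complex.real_smul]
  rw [hfun]
  have h1 : HasDerivAt (fun s : ℝ => z.re + s * w.re) w.re 0 := by
    simpa using ((hasDerivAt_id (0:ℝ)).mul_const w.re).const_add z.re
  have h2 : HasDerivAt (fun s : ℝ => z.im + s * w.im) w.im 0 := by
    simpa using ((hasDerivAt_id (0:ℝ)).mul_const w.im).const_add z.im
  have h4 := (((h1.pow 2).add (h2.pow 2)).sub_const 1).pow 2
  refine h4.congr_deriv ?_
  rw [norm_sq_re_im]
  simp only [Pi.add_apply, Pi.pow_apply]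
  ring

lemma quad_deriv {m n : Type*} [Fintype m] [Fintype n]
    (L : Matrix m m ℂ) (N : Matrix n n ℂ) (hL : L.IsHermitian) (hN : N.IsHermitian)
    (Z W : Matrix m n ℂ) :
    HasDerivAt (fun s : ℝ => (1/2) * (Matrix.trace ((Z + s • W)ᴴ * L * (Z + s • W) * Nᵀ)).re)
      ((Matrix.trace ((L * Z * Nᵀ)ᴴ * W)).re) 0 := by
  set t0 := Matrix.trace (Zᴴ * L * Z * Nᵀ) with ht0
  set t1 := Matrix.trace (Wᴴ * L * Z * Nᵀ) with ht1
  set t2 := Matrix.trace (Zᴴ * L * W * Nᵀ) with ht2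
  set t3 := Matrix.trace (Wᴴ * L * W * Nᵀ) with ht3
  have hsmul : ∀ s : ℝ, s • W = (s:ℂ) • W := by
    intro s; ext i j; simp [Complex.real_smul]
  have hsmulZ : ∀ s : ℝ, (s • W)ᴴ = (s:ℂ) • Wᴴ := by
    intro s; rw [hsmul]; ext i j; simp [conjTranspose_apply]
  have hfun : (fun s : ℝ => (1/2) * (Matrix.trace ((Z + s • W)ᴴ * L * (Z + s • W) * Nᵀ)).re)
      = fun s : ℝ => (1/2) * (t0.re + s * t1.re + s * t2.re + s^2 * t3.re) := by
    funext s
    have h : Matrix.trace ((Z + s • W)ᴴ * L * (Z + s • W) * Nᵀ)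
        = t0 + (s:ℂ) • t1 + (s:ℂ) • t2 + ((s:ℂ) * (s:ℂ)) • t3 := by
      rw [conjTranspose_add, hsmulZ, hsmul s]
      simp only [Matrix.add_mul, Matrix.mul_add, Matrix.smul_mul, Matrix.mul_smul,
        Matrix.trace_add, Matrix.trace_smul, smul_smul, ht0, ht1, ht2, ht3, smul_eq_mul]
      ring
    rw [h]
    simp only [Complex.add_re, smul_eq_mul, Complex.mul_re, Complex.ofReal_re,
      Complex.ofReal_im, Complex.mul_im]
    ring
  rw [hfun]
  have h1 : HasDerivAt (fun s : ℝ => t0.re + s * t1.re + s * t2.re + s^2 * t3.re)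
      (t1.re + t2.re) 0 := by
    have a1 : HasDerivAt (fun s : ℝ => s * t1.re) t1.re 0 := by
      simpa using (hasDerivAt_id (0:ℝ)).mul_const t1.re
    have a2 : HasDerivAt (fun s : ℝ => s * t2.re) t2.re 0 := by
      simpa using (hasDerivAt_id (0:ℝ)).mul_const t2.re
    have a3 : HasDerivAt (fun s : ℝ => s^2 * t3.re) 0 0 := by
      simpa using (hasDerivAt_pow 2 (0:ℝ)).mul_const t3.re
    have := (((hasDerivAt_const (0:ℝ) t0.re).add a1).add a2).add a3
    exact this.congr_deriv (by simp)
  have h2 := h1.const_mul (1/2 : ℝ)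
  refine h2.congr_deriv ?_
  have key : Matrix.trace ((L * Z * Nᵀ)ᴴ * W) = t2 := by
    rw [ht2, conjTranspose_mul, conjTranspose_mul, hL.eq,
      show (Nᵀ)ᴴ = Nᵀ from (hN.transpose).eq, Matrix.mul_assoc, Matrix.trace_mul_comm]
  have hconj : t1 = starRingEnd ℂ t2 := by
    rw [ht1, ht2]
    rw [show (starRingEnd ℂ) (Matrix.trace (Zᴴ * L * W * Nᵀ)) = star (Matrix.trace (Zᴴ * L * W * Nᵀ)) from rfl,
      ← Matrix.trace_conjTranspose]
    rw [conjTranspose_mul, conjTranspose_mul, conjTranspose_mul, hL.eq,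
      conjTranspose_conjTranspose, show (Nᵀ)ᴴ = Nᵀ from (hN.transpose).eq,
      Matrix.trace_mul_comm]
    congr 1
    rw [Matrix.mul_assoc Wᴴ L Z]
  rw [key, hconj]
  simp [Complex.conj_re]
  ring



open Matrix in
/-- Gradient formula for the discrete Ginzburg–Landau energy: the directional
derivative of `GL` at `Z` in the direction `W` is `Re tr (Gᴴ W)` where
`G = L_A Z N_Bᵀ + N_A Z L_Bᵀ + λ (M_A U M_Bᵀ) ⊙ Z`. -/
theorem stmt_16 {m n : Type*} [Fintype m] [Fintype n]
    (L_A N_A : Matrix m m ℂ) (L_B N_B : Matrix n n ℂ)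
    (hLA : L_A.IsHermitian) (hNA : N_A.IsHermitian)
    (hLB : L_B.IsHermitian) (hNB : N_B.IsHermitian)
    (m_A : m → ℝ) (m_B : n → ℝ) (lam : ℝ)
    (Z W : Matrix m n ℂ)
    (G : Matrix m n ℂ)
    (hG : G = L_A * Z * N_Bᵀ + N_A * Z * L_Bᵀ
        + lam • Matrix.of fun i j => ((m_A i * m_B j * (‖Z i j‖ ^ 2 - 1) : ℝ) : ℂ) * Z i j) :
    HasDerivAt
      (fun s : ℝ =>
        (1 / 2) * (Matrix.trace ((Z + s • W)ᴴ * L_A * (Z + s • W) * N_Bᵀ)).re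
          + (1 / 2) * (Matrix.trace ((Z + s • W)ᴴ * N_A * (Z + s • W) * L_Bᵀ)).re
          + (lam / 4) * ∑ i : m, ∑ j : n,
              m_A i * m_B j * (‖(Z + s • W) i j‖ ^ 2 - 1) ^ 2)
      ((Matrix.trace (Gᴴ * W)).re) 0 := by
  classical
  have hA := quad_deriv L_A N_B hLA hNB Z W
  have hB := quad_deriv N_A L_B hNA hLB Z W
  -- quartic part
  have hQ : HasDerivAt
      (fun s : ℝ => (lam / 4) * ∑ i : m, ∑ j : n,
          m_A i * m_B j * (‖(Z + s • W) i j‖ ^ 2 - 1) ^ 2)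
      ((lam / 4) * ∑ i : m, ∑ j : n,
          m_A i * m_B j * (4 * (‖Z i j‖ ^ 2 - 1)
            * ((Z i j).re * (W i j).re + (Z i j).im * (W i j).im))) 0 := by
    have hs : ∀ s : ℝ, ∀ i j, (Z + s • W) i j = Z i j + s • W i j := by
      intro s i j; simp
    have h : HasDerivAt
        (fun s : ℝ => ∑ i : m, ∑ j : n, m_A i * m_B j * (‖(Z + s • W) i j‖ ^ 2 - 1) ^ 2)
        (∑ i : m, ∑ j : n, m_A i * m_B j * (4 * (‖Z i j‖ ^ 2 - 1)
            * ((Z i j).re * (W i j).re + (Z i j).im * (W i j).im))) 0 := by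
      have : (fun s : ℝ => ∑ i : m, ∑ j : n, m_A i * m_B j * (‖(Z + s • W) i j‖ ^ 2 - 1) ^ 2)
          = fun s : ℝ => ∑ i : m, ∑ j : n, m_A i * m_B j * (‖Z i j + s • W i j‖ ^ 2 - 1) ^ 2 := by
        funext s; simp [hs]
      rw [this]
      apply HasDerivAt.fun_sum
      intro i _
      apply HasDerivAt.fun_sum
      intro j _
      exact (entry_deriv (Z i j) (W i j)).const_mul (m_A i * m_B j)
    exact h.const_mul (lam / 4)
  have htotal := (hA.add hB).add hQ
  refine htotal.congr_deriv ?_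
  -- value equality
  rw [hG]
  rw [conjTranspose_add, conjTranspose_add, Matrix.add_mul, Matrix.add_mul,
    Matrix.trace_add, Matrix.trace_add, Complex.add_re, Complex.add_re]
  congr 1
  -- third summand
  have hsm : (lam • Matrix.of fun i j => ((m_A i * m_B j * (‖Z i j‖ ^ 2 - 1) : ℝ) : ℂ) * Z i j)ᴴ
      = lam • (Matrix.of fun i j => ((m_A i * m_B j * (‖Z i j‖ ^ 2 - 1) : ℝ) : ℂ) * Z i j)ᴴ := by
    ext i j; simp [conjTranspose_apply]
  rw [hsm, Matrix.smul_mul, Matrix.trace_smul]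
  have hre : ∀ z : ℂ, (lam • z).re = lam * z.re := by
    intro z; simp [Complex.real_smul]
  rw [hre]
  have htr : (Matrix.trace ((Matrix.of fun i j => ((m_A i * m_B j * (‖Z i j‖ ^ 2 - 1) : ℝ) : ℂ) * Z i j)ᴴ * W)).re
      = ∑ j : n, ∑ i : m, (m_A i * m_B j * (‖Z i j‖ ^ 2 - 1))
          * ((Z i j).re * (W i j).re + (Z i j).im * (W i j).im) := by
    rw [Matrix.trace]
    simp only [Matrix.diag, Matrix.mul_apply, conjTranspose_apply, Matrix.of_apply,
      Complex.re_sum]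
    refine Finset.sum_congr rfl fun j _ => Finset.sum_congr rfl fun i _ => ?_
    simp [Complex.mul_re, Complex.mul_im, Complex.conj_re, Complex.conj_im,
      ← Complex.ofReal_pow]
    ring
  rw [htr, Finset.sum_comm, Finset.mul_sum, Finset.mul_sum]
  refine Finset.sum_congr rfl fun i _ => ?_
  rw [Finset.mul_sum, Finset.mul_sum]
  refine Finset.sum_congr rfl fun j _ => ?_
  ring
end

section
/- Let w₁, w₂, w₃ be complex numbers and define b = w₁ − 1, c = w₃ − 1, d = 1, and a = 1 − w₁ + w₂ − w₃. Let s, t be real numbers satisfying (1−s)·(1−t) + s·(1−t)·w₁ + s·t·w₂ + (1−s)·t·w₃ = 0. Then t²·Im(a·conj c) + t·Im(a·conj d − c·conj b) + Im(b·conj d) = 0, and moreover if Re(a·t + b) ≠ 0 then s = −Re(c·t + d)/Re(a·t + b). -/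
open Complex in
/-- Locating an edge-edge intersection: if `(s, t)` is a zero of the bilinear
interpolant, then `t` solves a real quadratic equation and `s` is the
associated quotient. -/
theorem stmt_17 (w₁ w₂ w₃ : ℂ) (s t : ℝ)
    (b c d a : ℂ)
    (hb : b = w₁ - 1) (hc : c = w₃ - 1) (hd : d = 1)
    (ha : a = 1 - w₁ + w₂ - w₃)
    (h : (1 - (s : ℂ)) * (1 - (t : ℂ)) + (s : ℂ) * (1 - (t : ℂ)) * w₁
        + (s : ℂ) * (t : ℂ) * w₂ + (1 - (s : ℂ)) * (t : ℂ) * w₃ = 0) :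
    t ^ 2 * (a * (starRingEnd ℂ) c).im
        + t * ((a * (starRingEnd ℂ) d).im - (c * (starRingEnd ℂ) b).im)
        + (b * (starRingEnd ℂ) d).im = 0
      ∧ ((a * (t : ℂ) + b).re ≠ 0 →
          s = -(c * (t : ℂ) + d).re / (a * (t : ℂ) + b).re) := by
  have key : (s : ℂ) * (a * (t : ℂ) + b) + (c * (t : ℂ) + d) = 0 := by
    subst hb hc hd ha; linear_combination h
  have hre : s * (a * (t : ℂ) + b).re + (c * (t : ℂ) + d).re = 0 := by
    have := congrArg Complex.re key
    simpa [Complex.add_re, Complex.mul_re] using this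
  have him : s * (a * (t : ℂ) + b).im + (c * (t : ℂ) + d).im = 0 := by
    have := congrArg Complex.im key
    simpa [Complex.add_im, Complex.mul_im] using this
  constructor
  · simp only [Complex.add_re, Complex.add_im, Complex.mul_re, Complex.mul_im,
      Complex.conj_re, Complex.conj_im, Complex.ofReal_re, Complex.ofReal_im] at hre him ⊢
    ring_nf at hre him ⊢
    linear_combination (a.im * t + b.im) * hre - (a.re * t + b.re) * him
  · intro hz
    rw [eq_div_iff hz]
    linarith [hre]
end
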